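/- Let Δ ⊆ ℝ⁴ be a reflexive polytope and let v₁, v₂, v₃, v₄ ∈ Δ ∩ ℤ⁴ satisfy v₁ + v₂ + v₃ + v₄ ∈ 3·∂Δ. Then there exist a vertex (extreme point) m of Δ* with m ∈ ℤ⁴ and an index ℓ ∈ {1, 2, 3, 4} such that ⟨m, v_ℓ⟩ = 0 and ⟨m, vᵢ⟩ = −1 for the three indices i ≠ ℓ. -/

import Mathlib

open Pointwise

/-- The standard pairing `⟨m,n⟩ = ∑ i, mᵢ nᵢ` on `ℝ^d`. -/
def pairing {d : ℕ} (m n : Fin d → ℝ) : ℝ := ∑ i, m i * n i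

/-- A point of `ℝ^d` is a lattice point if all coordinates are integers. -/
def IsLatticePt {d : ℕ} (v : Fin d → ℝ) : Prop := ∀ i, ∃ n : ℤ, v i = (n : ℝ)

/-- The set of lattice points of `ℝ^d`. -/
def latticePts (d : ℕ) : Set (Fin d → ℝ) := {v | IsLatticePt v}

/-- A lattice polytope is the convex hull of finitely many lattice points. -/
def IsLatticePolytope {d : ℕ} (Δ : Set (Fin d → ℝ)) : Prop :=
  ∃ S : Finset (Fin d → ℝ), (S : Set (Fin d → ℝ)) ⊆ latticePts d ∧
    Δ = convexHull ℝ (S : Set (Fin d → ℝ))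

/-- The dual polytope `Δ* = {m : ⟨m,n⟩ ≥ -1 for all n ∈ Δ}`. -/
def dualPolytope {d : ℕ} (Δ : Set (Fin d → ℝ)) : Set (Fin d → ℝ) :=
  {m | ∀ n ∈ Δ, -1 ≤ pairing m n}

/-- A reflexive polytope: a lattice polytope with `0` in its interior
whose dual polytope is again a lattice polytope. -/
def IsReflexive {d : ℕ} (Δ : Set (Fin d → ℝ)) : Prop :=
  IsLatticePolytope Δ ∧ (0 : Fin d → ℝ) ∈ interior Δ ∧ IsLatticePolytope (dualPolytope Δ)

/-- `Cone(v₁,…,v_k) = {r₁v₁ + ⋯ + r_kv_k : rᵢ ≥ 0}`. -/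
def coneOf {d k : ℕ} (v : Fin k → (Fin d → ℝ)) : Set (Fin d → ℝ) :=
  {x | ∃ r : Fin k → ℝ, (∀ i, 0 ≤ r i) ∧ x = ∑ i, r i • v i}

/-- `r·∂Δ`, the frontier (topological boundary) of the dilate `rΔ`. -/
def bdry {d : ℕ} (r : ℝ) (Δ : Set (Fin d → ℝ)) : Set (Fin d → ℝ) := frontier (r • Δ)

/-- The points of `S` lie in a common proper face of `Δ`: there is `u` with
`⟨u,x⟩ ≤ 1` on `Δ` and `⟨u,v⟩ = 1` for all `v ∈ S`. -/
def InCommonFace {d : ℕ} (Δ : Set (Fin d → ℝ)) (S : Set (Fin d → ℝ)) : Prop :=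
  ∃ u : Fin d → ℝ, (∀ x ∈ Δ, pairing u x ≤ 1) ∧ ∀ v ∈ S, pairing u v = 1

/-- Coordinatewise cast of an integer vector to a real vector. -/
def toRealVec {d : ℕ} (n : Fin d → ℤ) : Fin d → ℝ := fun i => (n i : ℝ)

/-! Write `∑ vᵢ = 3q` with `q ∈ ∂Δ`. A supporting hyperplane of `Δ` at `q` gives `m ∈ Δ*` with
`⟨m, q⟩ = -1`; as `⟨·, q⟩ ≥ -1` on `Δ*`, the face of `Δ*` where it equals `-1` is nonempty and
extreme, so it contains a vertex of `Δ*`, a lattice point since `Δ*` is a lattice polytope. For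
such a vertex `m` the integers `⟨m, vᵢ⟩ ≥ -1` sum to `-3`, so one is `0` and the others are `-1`. -/

theorem frontier_smul₀ {G₀ α : Type*} [GroupWithZero G₀] [MulAction G₀ α] [TopologicalSpace α]
    [ContinuousConstSMul G₀ α] {c : G₀} (hc : c ≠ 0) (s : Set α) :
    frontier (c • s) = c • frontier s :=
  ((Homeomorph.smulOfNeZero c hc).image_frontier s).symm

theorem isExtreme_setOf_eq_of_forall_le {E : Type*} [AddCommGroup E] [Module ℝ E] {K : Set E}
    (f : E →ₗ[ℝ] ℝ) {c : ℝ} (hc : ∀ x ∈ K, c ≤ f x) : IsExtreme ℝ K {x ∈ K | f x = c} := by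
  refine ⟨fun x hx => hx.1, ?_⟩
  rintro x₁ hx₁ x₂ hx₂ x ⟨-, hx⟩ ⟨a, b, ha, hb, hab, rfl⟩
  have h₁ := hc x₁ hx₁
  have h₂ := hc x₂ hx₂
  have hcomb : a * f x₁ + b * f x₂ = c := by simpa using hx
  have hsum : a * (f x₁ - c) + b * (f x₂ - c) = 0 := by linear_combination hcomb - c * hab
  have hx₁c := ((add_eq_zero_iff_of_nonneg (mul_nonneg ha.le (sub_nonneg.2 h₁))
    (mul_nonneg hb.le (sub_nonneg.2 h₂))).1 hsum).1
  exact ⟨hx₁, by simpa [ha.ne', sub_eq_zero] using hx₁c⟩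

theorem exists_eq_zero_and_eq_neg_one_of_sum_eq {ι : Type*} [Fintype ι] (k : ι → ℤ)
    (hk : ∀ i, -1 ≤ k i) (hsum : ∑ i, k i = 1 - Fintype.card ι) :
    ∃ l, k l = 0 ∧ ∀ i, i ≠ l → k i = -1 := by
  classical
  have hn : ∀ i, 0 ≤ k i + 1 := fun i => by linarith [hk i]
  have hnsum : ∑ i, (k i + 1) = 1 := by simp [Finset.sum_add_distrib, hsum]
  obtain ⟨l, -, hl⟩ := Finset.exists_ne_zero_of_sum_ne_zero (hnsum ▸ one_ne_zero)
  rw [← Finset.add_sum_erase _ _ (Finset.mem_univ l)] at hnsum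
  have hrest : 0 ≤ ∑ i ∈ Finset.univ.erase l, (k i + 1) := Finset.sum_nonneg fun i _ => hn i
  have hzero := (Finset.sum_eq_zero_iff_of_nonneg fun i _ => hn i).1
    (show ∑ i ∈ Finset.univ.erase l, (k i + 1) = 0 by have := hn l; omega)
  refine ⟨l, by have := hn l; omega, fun i hi => ?_⟩
  have := hzero i (Finset.mem_erase.2 ⟨hi, Finset.mem_univ i⟩)
  omega

section

variable {d : ℕ}

theorem pairing_eq_dotProduct (m n : Fin d → ℝ) : pairing m n = m ⬝ᵥ n := rfl

theorem LinearMap.exists_eq_pairing (f : (Fin d → ℝ) →ₗ[ℝ] ℝ) :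
    ∃ w : Fin d → ℝ, ∀ x, f x = pairing w x :=
  ⟨fun i => f fun j => if i = j then 1 else 0, fun x => by
    simp [pairing, f.pi_apply_eq_sum_univ x, mul_comm]⟩

theorem IsLatticePt.exists_pairing_eq_intCast {m v : Fin d → ℝ} (hm : IsLatticePt m)
    (hv : IsLatticePt v) : ∃ k : ℤ, pairing m v = k := by
  choose a ha using hm
  choose b hb using hv
  exact ⟨∑ i, a i * b i, by simp [pairing, ha, hb]⟩

theorem IsLatticePolytope.convex {P : Set (Fin d → ℝ)} (hP : IsLatticePolytope P) :
    Convex ℝ P := by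
  obtain ⟨S, -, rfl⟩ := hP
  exact convex_convexHull ℝ _

theorem IsLatticePolytope.isCompact {P : Set (Fin d → ℝ)} (hP : IsLatticePolytope P) :
    IsCompact P := by
  obtain ⟨S, -, rfl⟩ := hP
  exact S.finite_toSet.isCompact_convexHull (𝕜 := ℝ)

theorem IsLatticePolytope.extremePoints_subset {P : Set (Fin d → ℝ)}
    (hP : IsLatticePolytope P) : P.extremePoints ℝ ⊆ latticePts d := by
  obtain ⟨S, hS, rfl⟩ := hP
  exact (extremePoints_convexHull_subset (𝕜 := ℝ)).trans hS

theorem exists_mem_dualPolytope_pairing_eq_neg_one_of_mem_frontier {Δ : Set (Fin d → ℝ)}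
    (hconv : Convex ℝ Δ) (h0 : 0 ∈ interior Δ) {q : Fin d → ℝ} (hq : q ∈ frontier Δ) :
    ∃ m ∈ dualPolytope Δ, pairing m q = -1 := by
  obtain ⟨f, hf⟩ := geometric_hahn_banach_open_point hconv.interior isOpen_interior hq.2
  have hfq : 0 < f q := by simpa using hf 0 h0
  have hle : ∀ x ∈ Δ, f x ≤ f q := by
    intro x hx
    refine closure_minimal (fun a ha => (hf a ha).le) (isClosed_le f.continuous continuous_const) ?_
    rw [hconv.closure_interior_eq_closure_of_nonempty_interior ⟨0, h0⟩]
    exact subset_closure hx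
  obtain ⟨w, hw⟩ : ∃ w, ∀ x, f x = pairing w x := f.toLinearMap.exists_eq_pairing
  have hpair : ∀ x, pairing (-(f q)⁻¹ • w) x = -(f x / f q) := fun x => by
    rw [pairing_eq_dotProduct, smul_dotProduct, ← pairing_eq_dotProduct, ← hw, smul_eq_mul]
    ring
  refine ⟨-(f q)⁻¹ • w, fun x hx => ?_, ?_⟩
  · rw [hpair, neg_le_neg_iff, div_le_one hfq]
    exact hle x hx
  · rw [hpair, div_self hfq.ne']

theorem IsReflexive.exists_extremePoint_dualPolytope_pairing_eq_neg_one
    {Δ : Set (Fin d → ℝ)} (hΔ : IsReflexive Δ) {q : Fin d → ℝ} (hq : q ∈ frontier Δ) :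
    ∃ m, IsLatticePt m ∧ m ∈ (dualPolytope Δ).extremePoints ℝ ∧ pairing m q = -1 := by
  obtain ⟨hP, h0, hdual⟩ := hΔ
  let L : (Fin d → ℝ) →ₗ[ℝ] ℝ := (dotProductBilin ℝ ℝ).flip q
  let F := {m ∈ dualPolytope Δ | L m = -1}
  have hF : IsExtreme ℝ (dualPolytope Δ) F :=
    isExtreme_setOf_eq_of_forall_le L fun m hm => hm q (hP.isCompact.isClosed.frontier_subset hq)
  have hFc : IsCompact F :=
    hdual.isCompact.inter_right (isClosed_eq L.continuous_of_finiteDimensional continuous_const)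
  obtain ⟨m₀, hm₀⟩ := exists_mem_dualPolytope_pairing_eq_neg_one_of_mem_frontier hP.convex h0 hq
  obtain ⟨m, hm⟩ := hFc.extremePoints_nonempty ⟨m₀, hm₀⟩
  have hmext := hF.extremePoints_subset_extremePoints hm
  exact ⟨m, hdual.extremePoints_subset hmext, hmext, hm.1.2⟩

end

/-- If `v₁,…,v₄` are lattice points of a reflexive 4-polytope `Δ`
with `v₁+v₂+v₃+v₄ ∈ 3·∂Δ`, then there is a lattice vertex `m` of `Δ*` and an index `ℓ`
with `⟨m,v_ℓ⟩ = 0` and `⟨m,vᵢ⟩ = -1` for all `i ≠ ℓ`. -/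
theorem exists_dual_vertex_of_sum_in_three_boundary
    (Δ : Set (Fin 4 → ℝ)) (hΔ : IsReflexive Δ)
    (v : Fin 4 → (Fin 4 → ℝ))
    (hvΔ : ∀ i, v i ∈ Δ) (hvL : ∀ i, IsLatticePt (v i))
    (hsum : (∑ i, v i) ∈ bdry 3 Δ) :
    ∃ m : Fin 4 → ℝ, IsLatticePt m ∧ m ∈ Set.extremePoints ℝ (dualPolytope Δ) ∧
      ∃ l : Fin 4, pairing m (v l) = 0 ∧ ∀ i, i ≠ l → pairing m (v i) = -1 := by
  rw [bdry, frontier_smul₀ three_ne_zero, Set.mem_smul_set_iff_inv_smul_mem₀ three_ne_zero] at hsum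
  obtain ⟨m, hmL, hmext, hm⟩ := hΔ.exists_extremePoint_dualPolytope_pairing_eq_neg_one hsum
  choose k hk using fun i => hmL.exists_pairing_eq_intCast (hvL i)
  have hk_ge : ∀ i, -1 ≤ k i := fun i => by exact_mod_cast hk i ▸ hmext.1 (v i) (hvΔ i)
  have hk_sum : ∑ i, k i = -3 := by
    rw [pairing_eq_dotProduct, dotProduct_smul, dotProduct_sum, smul_eq_mul] at hm
    simp only [← pairing_eq_dotProduct, hk] at hm
    exact_mod_cast (by linarith : ∑ i, (k i : ℝ) = -3)
  obtain ⟨l, hl, hother⟩ := exists_eq_zero_and_eq_neg_one_of_sum_eq k hk_ge (by simpa using hk_sum)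
  exact ⟨m, hmL, hmext, l, by simp [hk, hl], fun i hi => by simp [hk, hother i hi]⟩
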